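/- In the discrete-time optimal control problem with state equation X^{k+1} = F(X^k, U^k) and cost J = Φ(X^m) + Σ_{k=0}^{m−1} L(X^k, U^k), if (X^{k*}, U^{k*}) is a minimizer and F, L, Φ are differentiable, then there exist costates λ_k satisfying λ_m = ∇Φ(X^m), λ_k = (D_X F(X^k,U^k))ᵀ λ_{k+1} + ∇_X L(X^k,U^k), and (D_U F(X^k,U^k))ᵀ λ_{k+1} + ∇_U L(X^k,U^k) = 0. -/

import Mathlib

/-!
The costate is defined as the backward solution of the adjoint recursion
`Λ_m = DΦ(X^m)`, `Λ_k = Λ_{k+1} ∘ D_X F_k + D_X L_k`, so the first two conditions hold by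
construction. Perturbing the controls in a direction `d` moves the trajectory along the linearized
dynamics `δ_0 = 0`, `δ_{k+1} = D_X F_k δ_k + D_U F_k d_k`, and the cost at rate
`DΦ δ_m + Σ_k (D_X L_k δ_k + D_U L_k d_k)`. Summation by parts against the costate removes every
`δ_k`, leaving `Σ_k (Λ_{k+1} (D_U F_k d_k) + D_U L_k d_k)`. At a local minimum this vanishes for
every `d`, and taking `d` supported at a single time `k` gives the third condition.
-/

open Matrix

/-- The state trajectory generated by dynamics `F`, initial state `X0`, and a
control sequence `U`. -/
def traj {n p : ℕ} (F : (Fin n → ℝ) → (Fin p → ℝ) → (Fin n → ℝ))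
    (X0 : Fin n → ℝ) (U : ℕ → Fin p → ℝ) : ℕ → Fin n → ℝ
  | 0 => X0
  | k + 1 => F (traj F X0 U k) (U k)

/-- Extend a finitely indexed control sequence by zero. -/
def extCtrl {p m : ℕ} (U : Fin m → Fin p → ℝ) : ℕ → Fin p → ℝ :=
  fun k => if h : k < m then U ⟨k, h⟩ else 0

/-- Total cost `J = Φ(X^m) + Σ_{k<m} L(X^k, U^k)` as a function of the
control sequence. -/
noncomputable def totalCost {n p m : ℕ}
    (F : (Fin n → ℝ) → (Fin p → ℝ) → (Fin n → ℝ))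
    (L : (Fin n → ℝ) → (Fin p → ℝ) → ℝ) (Φ : (Fin n → ℝ) → ℝ)
    (X0 : Fin n → ℝ) (U : Fin m → Fin p → ℝ) : ℝ :=
  Φ (traj F X0 (extCtrl U) m) +
    ∑ k : Fin m, L (traj F X0 (extCtrl U) k) (U k)

open Finset

section Costate

variable {R E G : Type*} [CommSemiring R] [AddCommMonoid E] [Module R E]
  [AddCommMonoid G] [Module R G]

def tangentTraj (A : ℕ → E →ₗ[R] E) (B : ℕ → G →ₗ[R] E) (e : ℕ → G) : ℕ → E
  | 0 => 0
  | j + 1 => A j (tangentTraj A B e j) + B j (e j)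

def costate (A : ℕ → E →ₗ[R] E) (a : ℕ → Module.Dual R E) (φ : Module.Dual R E) (m k : ℕ) :
    Module.Dual R E :=
  if k < m then (costate A a φ m (k + 1)).comp (A k) + a k else φ
termination_by m - k

variable (A : ℕ → E →ₗ[R] E) (a : ℕ → Module.Dual R E) (φ : Module.Dual R E) {m k : ℕ}

theorem costate_of_lt (h : k < m) :
    costate A a φ m k = (costate A a φ m (k + 1)).comp (A k) + a k := by
  rw [costate, if_pos h]

theorem costate_of_le (h : m ≤ k) : costate A a φ m k = φ := by
  rw [costate, if_neg h.not_gt]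

theorem costate_apply_tangentTraj_add_sum (B : ℕ → G →ₗ[R] E) (e : ℕ → G) (m : ℕ) :
    φ (tangentTraj A B e m) + ∑ j ∈ range m, a j (tangentTraj A B e j) =
      ∑ j ∈ range m, costate A a φ m (j + 1) (B j (e j)) := by
  suffices hpartial : ∀ k ≤ m, costate A a φ m k (tangentTraj A B e k) +
      ∑ j ∈ range k, a j (tangentTraj A B e j) =
        ∑ j ∈ range k, costate A a φ m (j + 1) (B j (e j)) by
    simpa [costate_of_le] using hpartial m le_rfl
  intro k hk
  induction k with
  | zero => simp [tangentTraj]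
  | succ k ih =>
    have hprev := ih (by omega)
    rw [costate_of_lt A a φ (by omega : k < m)] at hprev
    simp only [tangentTraj, map_add, sum_range_succ, LinearMap.comp_apply,
      LinearMap.add_apply] at hprev ⊢
    rw [← hprev]
    abel

end Costate

theorem dotProduct_apply_single_one {R ι : Type*} [CommSemiring R] [Fintype ι] [DecidableEq ι]
    (f : Module.Dual R (ι → R)) (v : ι → R) : (fun i => f (Pi.single i 1)) ⬝ᵥ v = f v := by
  conv_rhs => rw [pi_eq_sum_univ' v]
  simp [dotProduct, mul_comm]

section Partial

variable (𝕜 : Type*) [NontriviallyNormedField 𝕜] {E G H : Type*} [NormedAddCommGroup E]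
  [NormedSpace 𝕜 E] [NormedAddCommGroup G] [NormedSpace 𝕜 G] [NormedAddCommGroup H]
  [NormedSpace 𝕜 H]

noncomputable def partialFst (f : E → G → H) (x : E) (y : G) : E →ₗ[𝕜] H :=
  fderiv 𝕜 (fun x' => f x' y) x

noncomputable def partialSnd (f : E → G → H) (x : E) (y : G) : G →ₗ[𝕜] H :=
  fderiv 𝕜 (fun y' => f x y') y

variable {𝕜}

theorem DifferentiableAt.hasDerivAt_comp_pair {f : E → G → H} {x : 𝕜 → E} {y : 𝕜 → G}
    {x' : E} {y' : G} {t : 𝕜} (hf : DifferentiableAt 𝕜 (fun q : E × G => f q.1 q.2) (x t, y t))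
    (hx : HasDerivAt x x' t) (hy : HasDerivAt y y' t) :
    HasDerivAt (fun s => f (x s) (y s))
      (partialFst 𝕜 f (x t) (y t) x' + partialSnd 𝕜 f (x t) (y t) y') t := by
  set D := fderiv 𝕜 (fun q : E × G => f q.1 q.2) (x t, y t)
  have hD : HasFDerivAt (fun q : E × G => f q.1 q.2) D (x t, y t) := hf.hasFDerivAt
  have hfst : HasFDerivAt (fun x₁ => f x₁ (y t)) (D.comp (.inl 𝕜 E G)) (x t) :=
    (hD.comp (x t) (hasFDerivAt_prodMk_left (𝕜 := 𝕜) (x t) (y t)) :)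
  have hsnd : HasFDerivAt (fun y₁ => f (x t) y₁) (D.comp (.inr 𝕜 E G)) (y t) :=
    (hD.comp (y t) (hasFDerivAt_prodMk_right (𝕜 := 𝕜) (x t) (y t)) :)
  have h := hD.comp_hasDerivAt t (hx.prodMk hy)
  rw [show (x', y') = ((x', 0) : E × G) + (0, y') by simp, map_add] at h
  refine h.congr_deriv ?_
  unfold partialFst partialSnd
  rw [hfst.fderiv, hsnd.fderiv]
  rfl

end Partial

section Trajectory

variable {n p : ℕ} (F : (Fin n → ℝ) → (Fin p → ℝ) → (Fin n → ℝ)) (X0 : Fin n → ℝ)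

theorem hasDerivAt_traj
    (hF : Differentiable ℝ (fun q : (Fin n → ℝ) × (Fin p → ℝ) => F q.1 q.2))
    {c : ℝ → ℕ → Fin p → ℝ} {e : ℕ → Fin p → ℝ} {t : ℝ}
    (hc : ∀ j, HasDerivAt (fun s => c s j) (e j) t) (j : ℕ) :
    HasDerivAt (fun s => traj F X0 (c s) j)
      (tangentTraj (fun i => partialFst ℝ F (traj F X0 (c t) i) (c t i))
        (fun i => partialSnd ℝ F (traj F X0 (c t) i) (c t i)) e j) t := by
  induction j with
  | zero => exact hasDerivAt_const t X0
  | succ j ih => exact (hF _).hasDerivAt_comp_pair ih (hc j)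

theorem extCtrl_coe {m : ℕ} (U : Fin m → Fin p → ℝ) (j : Fin m) : extCtrl U j = U j := by
  simp [extCtrl]

theorem hasDerivAt_extCtrl_add_smul {m : ℕ} (U d : Fin m → Fin p → ℝ) (t : ℝ) (j : ℕ) :
    HasDerivAt (fun s : ℝ => extCtrl (U + s • d) j) (extCtrl d j) t := by
  unfold extCtrl
  split_ifs with hj
  · simpa using ((hasDerivAt_id t).smul_const (d ⟨j, hj⟩)).const_add (U ⟨j, hj⟩)
  · exact hasDerivAt_const t 0

theorem totalCost_eq_sum_range {m : ℕ} (L : (Fin n → ℝ) → (Fin p → ℝ) → ℝ)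
    (Φ : (Fin n → ℝ) → ℝ) (U : Fin m → Fin p → ℝ) :
    totalCost F L Φ X0 U = Φ (traj F X0 (extCtrl U) m) +
      ∑ j ∈ range m, L (traj F X0 (extCtrl U) j) (extCtrl U j) := by
  rw [totalCost, ← Fin.sum_univ_eq_sum_range]
  simp only [extCtrl_coe]

variable (L : (Fin n → ℝ) → (Fin p → ℝ) → ℝ) (Φ : (Fin n → ℝ) → ℝ)

noncomputable def trajCostate (u : ℕ → Fin p → ℝ) (m : ℕ) : ℕ → Module.Dual ℝ (Fin n → ℝ) :=
  costate (fun j => partialFst ℝ F (traj F X0 u j) (u j))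
    (fun j => partialFst ℝ L (traj F X0 u j) (u j))
    (fderiv ℝ Φ (traj F X0 u m) : (Fin n → ℝ) →ₗ[ℝ] ℝ) m

theorem hasLineDerivAt_totalCost {m : ℕ}
    (hF : Differentiable ℝ (fun q : (Fin n → ℝ) × (Fin p → ℝ) => F q.1 q.2))
    (hL : Differentiable ℝ (fun q : (Fin n → ℝ) × (Fin p → ℝ) => L q.1 q.2))
    (hΦ : Differentiable ℝ Φ) (U d : Fin m → Fin p → ℝ) :
    HasLineDerivAt ℝ (totalCost F L Φ X0)
      (∑ j : Fin m, (trajCostate F X0 L Φ (extCtrl U) m (j + 1)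
          (partialSnd ℝ F (traj F X0 (extCtrl U) j) (U j) (d j)) +
        partialSnd ℝ L (traj F X0 (extCtrl U) j) (U j) (d j))) U d := by
  have hc := hasDerivAt_extCtrl_add_smul U d 0
  have hT := hasDerivAt_traj F X0 hF hc
  have hΦT := fun j => (hΦ _).hasFDerivAt.comp_hasDerivAt (0 : ℝ) (hT j)
  have hLT := fun j => (hL _).hasDerivAt_comp_pair (hT j) (hc j)
  have h := (hΦT m).add (HasDerivAt.fun_sum (u := range m) fun j _ => hLT j)
  simp only [zero_smul, add_zero] at h
  simp only [HasLineDerivAt, totalCost_eq_sum_range]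
  refine h.congr_deriv ?_
  have hadj := costate_apply_tangentTraj_add_sum
    (fun j => partialFst ℝ F (traj F X0 (extCtrl U) j) (extCtrl U j))
    (fun j => partialFst ℝ L (traj F X0 (extCtrl U) j) (extCtrl U j))
    (fderiv ℝ Φ (traj F X0 (extCtrl U) m) : (Fin n → ℝ) →ₗ[ℝ] ℝ)
    (fun j => partialSnd ℝ F (traj F X0 (extCtrl U) j) (extCtrl U j)) (extCtrl d) m
  rw [ContinuousLinearMap.coe_coe] at hadj
  rw [sum_add_distrib, ← add_assoc, hadj, ← sum_add_distrib, ← Fin.sum_univ_eq_sum_range]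
  simp only [extCtrl_coe]
  rfl

end Trajectory

/-- The gradient and Jacobian-transpose identities are expressed through pairings with arbitrary
tangent vectors `v`, `w`. -/
theorem discrete_optimal_control_necessary_conditions {n p m : ℕ}
    (F : (Fin n → ℝ) → (Fin p → ℝ) → (Fin n → ℝ))
    (L : (Fin n → ℝ) → (Fin p → ℝ) → ℝ) (Φ : (Fin n → ℝ) → ℝ)
    (hF : ContDiff ℝ 1 (fun q : (Fin n → ℝ) × (Fin p → ℝ) => F q.1 q.2))
    (hL : ContDiff ℝ 1 (fun q : (Fin n → ℝ) × (Fin p → ℝ) => L q.1 q.2))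
    (hΦ : ContDiff ℝ 1 Φ)
    (X0 : Fin n → ℝ) (Ustar : Fin m → Fin p → ℝ)
    (hmin : IsLocalMin (totalCost F L Φ X0) Ustar)
    (X : ℕ → Fin n → ℝ) (hX : X = traj F X0 (extCtrl Ustar)) :
    ∃ lam : ℕ → Fin n → ℝ,
      (∀ v : Fin n → ℝ, lam m ⬝ᵥ v = fderiv ℝ Φ (X m) v) ∧
      (∀ k : Fin m, ∀ v : Fin n → ℝ,
        lam k ⬝ᵥ v =
          lam (k + 1) ⬝ᵥ (fderiv ℝ (fun x => F x (Ustar k)) (X k) v) +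
            fderiv ℝ (fun x => L x (Ustar k)) (X k) v) ∧
      (∀ k : Fin m, ∀ w : Fin p → ℝ,
        lam (k + 1) ⬝ᵥ (fderiv ℝ (fun u => F (X k) u) (Ustar k) w) +
            fderiv ℝ (fun u => L (X k) u) (Ustar k) w = 0) := by
  subst hX
  refine ⟨fun k i => trajCostate F X0 L Φ (extCtrl Ustar) m k (Pi.single i 1),
    fun v => ?_, fun k v => ?_, fun k w => ?_⟩
  · rw [dotProduct_apply_single_one]
    unfold trajCostate
    rw [costate_of_le _ _ _ le_rfl]
    rfl
  · rw [dotProduct_apply_single_one, dotProduct_apply_single_one]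
    unfold trajCostate
    rw [costate_of_lt _ _ _ k.isLt]
    simp [partialFst, extCtrl_coe]
  · have h := hmin.hasLineDerivAt_eq_zero <| hasLineDerivAt_totalCost F X0 L Φ
      (hF.differentiable one_ne_zero) (hL.differentiable one_ne_zero)
      (hΦ.differentiable one_ne_zero) Ustar (Pi.single k w)
    rw [Fintype.sum_eq_single k fun j hj => by simp [Pi.single_eq_of_ne hj],
      Pi.single_eq_same] at h
    rw [dotProduct_apply_single_one]
    simpa [partialSnd] using h
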